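/- Let K be a field of characteristic 0, n ≥ 3, and 1 ≤ ℓ ≤ n−2. For the permutation w = (n, ℓ, n−1, n−2, …, ℓ+1, ℓ−1, …, 1) ∈ S_n (w_1 = n, w_2 = ℓ, and w_3 > … > w_n the decreasing arrangement of {1,…,n−1} ∖ {ℓ}), the restricted matching field ideal F_{n,ℓ,w} is nonzero and monomial-free, i.e. w ∈ T_{n,ℓ}. -/

import Mathlib

open MvPolynomial

/-- Index type for the Plücker variables `P_J`: nonempty proper subsets of `{1,…,n}`
(encoded as `Fin n`, where `i : Fin n` stands for the value `i+1`). -/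
abbrev PIdx (n : ℕ) := {J : Finset (Fin n) // J.Nonempty ∧ J ≠ Finset.univ}

/-- The transposition (1 2) acting on (1-based) row indices. -/
def swap12 (r : ℕ) : ℕ := if r = 1 then 2 else if r = 2 then 1 else r

/-- The image of the Plücker variable `P_J` under the monomial map `φ_ℓ` associated to the
block diagonal matching field `B_ℓ`: writing `J = {j_1 < … < j_k}` (as 1-based values),
it is `sgn(σ)·x_{σ(1),j_1}⋯x_{σ(k),j_k}` where `σ = id` if `|J| = 1` or
`|J ∩ {1,…,ℓ}| ≥ 2`, and `σ = (1 2)` otherwise. Variables `x_{i,j}` are indexed by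
pairs of 1-based natural numbers. -/
noncomputable def phiVal (K : Type*) [CommRing K] (n ℓ : ℕ) (J : Finset (Fin n)) :
    MvPolynomial (ℕ × ℕ) K :=
  let l : List ℕ := (J.sort (· ≤ ·)).map (fun j => (j : ℕ) + 1)
  if J.card = 1 ∨ 2 ≤ (J.filter (fun j : Fin n => (j : ℕ) + 1 ≤ ℓ)).card then
    ((List.range l.length).map
      (fun r => (X (r + 1, l.getD r 0) : MvPolynomial (ℕ × ℕ) K))).prod
  else
    - ((List.range l.length).map
      (fun r => (X (swap12 (r + 1), l.getD r 0) : MvPolynomial (ℕ × ℕ) K))).prod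

/-- The monomial map `φ_ℓ : K[P_J] → K[x_{i,j}]`. -/
noncomputable def phiMap (K : Type*) [CommRing K] (n ℓ : ℕ) :
    MvPolynomial (PIdx n) K →ₐ[K] MvPolynomial (ℕ × ℕ) K :=
  aeval (fun J => phiVal K n ℓ J.1)

/-- The matching field ideal `F_{n,ℓ} = ker φ_ℓ`. -/
noncomputable def Fnl (K : Type*) [CommRing K] (n ℓ : ℕ) :
    Ideal (MvPolynomial (PIdx n) K) :=
  RingHom.ker (phiMap K n ℓ)

/-- Componentwise comparison `A ≤ B` of two finsets via their increasing enumerations. -/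
def finsetLE {n : ℕ} (A B : Finset (Fin n)) : Prop :=
  List.Forall₂ (· ≤ ·) (A.sort (· ≤ ·)) (B.sort (· ≤ ·))

/-- The set `{w_1, …, w_k}` of the first `k` values of the one-line notation of `w`. -/
def initSet {n : ℕ} (w : Equiv.Perm (Fin n)) (k : ℕ) : Finset (Fin n) :=
  (Finset.univ.filter (fun i : Fin n => (i : ℕ) < k)).image w

/-- `S_w`: the set of subsets `J` with `J ≰ {w_1,…,w_{|J|}}`. -/
def Sw {n : ℕ} (w : Equiv.Perm (Fin n)) : Set (Finset (Fin n)) :=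
  {J | ¬ finsetLE J (initSet w J.card)}

/-- Index type for the Plücker variables that do not vanish on the Schubert variety `X(w)`. -/
abbrev RIdx (n : ℕ) (w : Equiv.Perm (Fin n)) := {J : PIdx n // J.1 ∉ Sw w}

open Classical in
/-- The projection `π_w` sending `P_J ↦ 0` for `J ∈ S_w` and `P_J ↦ P_J` otherwise. -/
noncomputable def piw (K : Type*) [CommRing K] {n : ℕ} (w : Equiv.Perm (Fin n)) :
    MvPolynomial (PIdx n) K →ₐ[K] MvPolynomial (RIdx n w) K :=
  aeval (fun J => if h : J.1 ∈ Sw w then 0 else X (⟨J, h⟩ : RIdx n w))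

/-- The restricted matching field ideal `F_{n,ℓ,w} = π_w(F_{n,ℓ})`. -/
noncomputable def Fnlw (K : Type*) [CommRing K] (n ℓ : ℕ) (w : Equiv.Perm (Fin n)) :
    Ideal (MvPolynomial (RIdx n w) K) :=
  Ideal.map (piw K w) (Fnl K n ℓ)

/-- An ideal of a polynomial ring is monomial-free if it contains no (nonzero) monomial. -/
def MonomialFree {σ K : Type*} [CommSemiring K] (I : Ideal (MvPolynomial σ K)) : Prop :=
  ∀ m : σ →₀ ℕ, (monomial m (1 : K)) ∉ I

/-- The adjacent transposition `s_{i+1} = (i+1, i+2)` (1-based), i.e. the swap of the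
0-based positions `i` and `i+1` of `Fin n`. -/
def adjT (n i : ℕ) : Equiv.Perm (Fin n) :=
  if h : i + 1 < n then Equiv.swap ⟨i, Nat.lt_of_succ_lt h⟩ ⟨i + 1, h⟩ else 1

/-- `Z_n`: permutations that are products of adjacent transpositions with pairwise
distance at least 2 between the indices. -/
def Zset (n : ℕ) : Set (Equiv.Perm (Fin n)) :=
  {w | ∃ l : List ℕ, (∀ i ∈ l, i + 1 < n) ∧
        l.Pairwise (fun i j => i + 2 ≤ j ∨ j + 2 ≤ i) ∧
        w = (l.map (adjT n)).prod}

/-- `oneLine w i = w_i` : the `i`-th entry (1-based, with 1-based values) of the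
one-line notation of `w`. -/
def oneLine {n : ℕ} (w : Equiv.Perm (Fin n)) (i : ℕ) : ℕ :=
  if h : i - 1 < n then (w ⟨i - 1, h⟩ : ℕ) + 1 else 0

/-- The (1-based) position `t` with `w_t = n`. -/
def posOfTop {n : ℕ} (w : Equiv.Perm (Fin n)) : ℕ :=
  if h : 0 < n then ((w.symm ⟨n - 1, by omega⟩ : ℕ) + 1) else 0

/-- `deleteTop w u` holds iff `u = ul(w)` is obtained from `w` by deleting the entry `n`
from its one-line notation. -/
def deleteTop {n : ℕ} (w : Equiv.Perm (Fin n)) (u : Equiv.Perm (Fin (n - 1))) : Prop :=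
  ∀ i, 1 ≤ i → i ≤ n - 1 →
    oneLine u i = if i < posOfTop w then oneLine w i else oneLine w (i + 1)

/-- The descending property: writing `w_t = n`, one has `w_t > w_{t+1} > … > w_n`. -/
def descendingProp {n : ℕ} (w : Equiv.Perm (Fin n)) : Prop :=
  ∀ i, posOfTop w ≤ i → i < n → oneLine w (i + 1) < oneLine w i

/-- `T_{n,ℓ}`: the set of permutations `w` for which `F_{n,ℓ,w}` is nonzero and
monomial-free. -/
def Tset (K : Type*) [Field K] (n ℓ : ℕ) : Set (Equiv.Perm (Fin n)) :=
  {w | Fnlw K n ℓ w ≠ ⊥ ∧ MonomialFree (Fnlw K n ℓ w)}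

/-- The one-line notation of `w` as a list of 1-based values. -/
def olList {n : ℕ} (w : Equiv.Perm (Fin n)) : List ℕ :=
  (List.finRange n).map (fun i => (w i : ℕ) + 1)

/-- A list of naturals is 312-free if it has no subsequence of type 312. -/
def List312Free (l : List ℕ) : Prop :=
  ¬ ∃ i j k : ℕ, i < j ∧ j < k ∧ k < l.length ∧
      l.getD j 0 < l.getD k 0 ∧ l.getD k 0 < l.getD i 0

/-- The decreasing list `[a, a-1, …, 1]`. -/
def descTo1 (a : ℕ) : List ℕ := (List.range a).reverse.map (· + 1)

/-- The set `P_ℓ ⊆ S_n`. -/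
def Pset (n ℓ : ℕ) : Set (Equiv.Perm (Fin n)) :=
  if ℓ = n then {w | List312Free (olList w)}
  else
    {w | (¬ List312Free (olList w) →
            oneLine w 2 = ℓ ∧ oneLine w 2 < oneLine w 1 ∧
            List312Free ((olList w).erase ℓ)) ∧
         (∀ m, 3 ≤ m → m ≤ n →
            (olList w).filter (fun v => v ≤ m) = (m - 1) :: m :: descTo1 (m - 2) →
            oneLine w 1 < oneLine w 2 ∧ oneLine w 2 ≤ ℓ ∧
            (olList w).filter (fun v => v ≤ oneLine w 2) =
              oneLine w 1 :: oneLine w 2 ::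
                ((descTo1 (oneLine w 2 - 1)).filter (fun v => v ≠ oneLine w 1)))}

/-- The set `A_1`. -/
def A1set (n : ℕ) : Set (Equiv.Perm (Fin n)) :=
  {w | (∃ u : Equiv.Perm (Fin (n - 1)), deleteTop w u ∧ u ∈ Zset (n - 1)) ∧
       oneLine w n = n - 2 ∧
       ({oneLine w (n - 2), oneLine w (n - 1)} : Set ℕ) = {n - 1, n}}

/-- The set `A_2` (with `ul(w) ∈ T_{n-1,ℓ'}`). -/
def A2set (K : Type*) [Field K] (n ℓ' : ℕ) : Set (Equiv.Perm (Fin n)) :=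
  {w | (∃ u : Equiv.Perm (Fin (n - 1)),
          deleteTop w u ∧ u ∈ Tset K (n - 1) ℓ' ∧ descendingProp u) ∧
       (∀ s t, 1 ≤ s → s ≤ n → 1 ≤ t → t ≤ n →
          oneLine w s = n - 1 → oneLine w t = n → s - 1 ≤ t)}

/-!
Specialize `x_{2,j} ↦ 0` for `j > ℓ` and every other `x_{i,j} ↦ 1`. The matching field `B_ℓ`
puts `min J` in row 2 exactly when `|J| ≥ 2` and `|J ∩ {1,…,ℓ}| ≤ 1`, so `φ_ℓ(P_J)` specializes
to `0` when `J` has at least two elements and misses `{1,…,ℓ}`, and to `±1` otherwise.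
For `w = (n, ℓ, n-1, …, ℓ+1, ℓ-1, …, 1)` the first `k ≥ 2` values of `w` are `ℓ` and the
`k - 1` largest values other than `ℓ`, so these `J` are precisely the elements of `S_w`. Hence the
specialization factors through `π_w`, kills `F_{n,ℓ,w}` and sends every surviving `P_J` to a
unit: no monomial lies in `F_{n,ℓ,w}`. The ideal is nonzero since it contains the image of
`P_{n-1} P_{1,n} - P_n P_{1,n-1} ∈ F_{n,ℓ}`, whose four variables survive `π_w`.
-/

section GaleOrder

open Finset

variable {n : ℕ} {A B : Finset (Fin n)}

lemma Fin.card_filter_le_val (m : ℕ) : #{i : Fin n | m ≤ (i : ℕ)} = n - m := by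
  have h := card_filter_add_card_filter_not (s := (univ : Finset (Fin n)))
    (fun i : Fin n => (i : ℕ) < m)
  simp only [not_lt, card_univ, Fintype.card_fin, Fin.card_filter_val_lt] at h
  omega

lemma min'_le_sub_card (hA : A.Nonempty) : (A.min' hA : ℕ) ≤ n - #A := by
  have : #A ≤ #{i : Fin n | (A.min' hA : ℕ) ≤ i} :=
    card_le_card fun a ha => mem_filter.2 ⟨mem_univ a, A.min'_le a ha⟩
  rw [Fin.card_filter_le_val] at this
  omega

lemma finsetLE_iff_orderEmbOfFin {k : ℕ} (hA : #A = k) (hB : #B = k) :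
    finsetLE A B ↔ ∀ i, A.orderEmbOfFin hA i ≤ B.orderEmbOfFin hB i := by
  rw [finsetLE, List.forall₂_iff_get]
  simp only [length_sort, hA, hB, true_and, orderEmbOfFin_apply, List.get_eq_getElem]
  exact ⟨fun h i => h i i.2 i.2, fun h i hi _ => h ⟨i, hi⟩⟩

lemma min'_le_min'_of_finsetLE (h : finsetLE A B) (hA : A.Nonempty) (hB : B.Nonempty) :
    A.min' hA ≤ B.min' hB := by
  have hAB : #A = #B := by simpa using h.length_eq
  have hpos : 0 < #A := card_pos.2 hA
  have := (finsetLE_iff_orderEmbOfFin rfl hAB.symm).1 h ⟨0, hpos⟩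
  rwa [orderEmbOfFin_zero, orderEmbOfFin_zero] at this

lemma finsetLE_of_card_filter_le (hAB : #A = #B)
    (h : ∀ t : Fin n, #{a ∈ A | t ≤ a} ≤ #{b ∈ B | t ≤ b}) : finsetLE A B := by
  rw [finsetLE_iff_orderEmbOfFin rfl hAB.symm]
  intro i
  set eA := A.orderEmbOfFin rfl
  set eB := B.orderEmbOfFin hAB.symm
  by_contra! hlt
  have hA : #(Ici i) ≤ #{a ∈ A | eA i ≤ a} :=
    card_le_card_of_injOn eA
      (fun j hj => mem_filter.2 ⟨A.orderEmbOfFin_mem rfl j, eA.monotone (mem_Ici.1 hj)⟩)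
      eA.injective.injOn
  have hB : #{b ∈ B | eA i ≤ b} ≤ #(Ioi i) := by
    refine (card_le_card (t := (Ioi i).image eB) fun b hb => ?_).trans card_image_le
    obtain ⟨hbB, hib⟩ := mem_filter.1 hb
    obtain ⟨j, rfl⟩ : b ∈ Set.range eB := by rwa [range_orderEmbOfFin]
    exact mem_image.2 ⟨j, mem_Ioi.2 (eB.lt_iff_lt.1 (hlt.trans_le hib)), rfl⟩
  have := h (eA i)
  rw [Fin.card_Ici, Fin.card_Ioi] at *
  omega

lemma finsetLE_of_min'_le (hAB : #A = #B) (hA : A.Nonempty) (hB : B.Nonempty)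
    (htop : ∀ v : Fin n, n - #B < v → v ∈ B) (hmin : A.min' hA ≤ B.min' hB) :
    finsetLE A B := by
  refine finsetLE_of_card_filter_le hAB fun t => ?_
  by_cases ht : t ≤ A.min' hA
  · rw [filter_true_of_mem fun b hb => ht.trans (hmin.trans (B.min'_le b hb))]
    exact (card_filter_le A _).trans hAB.le
  · have hA1 : #{a ∈ A | t ≤ a} ≤ #A - 1 := by
      rw [← card_erase_of_mem (A.min'_mem hA)]
      exact card_le_card fun a ha => mem_erase.2
        ⟨fun h => ht (h ▸ (mem_filter.1 ha).2), (mem_filter.1 ha).1⟩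
    have hAt : #{a ∈ A | t ≤ a} ≤ n - t := by
      rw [← Fin.card_filter_le_val]
      exact card_le_card fun a ha => mem_filter.2 ⟨mem_univ a, (mem_filter.1 ha).2⟩
    have hBt : n - max (t : ℕ) (n - #B + 1) ≤ #{b ∈ B | t ≤ b} := by
      rw [← Fin.card_filter_le_val]
      refine card_le_card fun v hv => ?_
      have hv := (mem_filter.1 hv).2
      exact mem_filter.2 ⟨htop v (by omega), Fin.le_def.2 (by omega)⟩
    have := card_pos.2 hB
    omega

end GaleOrder

lemma orderEmbOfFin_one_le {α : Type*} [LinearOrder α] {s : Finset α} (hs : 1 < s.card)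
    {x y : α} (hx : x ∈ s) (hy : y ∈ s) (hxy : x < y) : s.orderEmbOfFin rfl ⟨1, hs⟩ ≤ y := by
  set e := s.orderEmbOfFin rfl
  obtain ⟨i, rfl⟩ : x ∈ Set.range e := by rwa [Finset.range_orderEmbOfFin]
  obtain ⟨j, rfl⟩ : y ∈ Set.range e := by rwa [Finset.range_orderEmbOfFin]
  exact e.monotone (Fin.le_def.2 (Nat.one_le_iff_ne_zero.2 fun h =>
    (e.lt_iff_lt.1 hxy).not_ge (Fin.le_def.2 (by omega))))

section DescTo1

lemma descTo1_succ (a : ℕ) : descTo1 (a + 1) = (a + 1) :: descTo1 a := by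
  simp [descTo1, List.range_succ]

lemma le_of_mem_descTo1 {a x : ℕ} (h : x ∈ descTo1 a) : x ≤ a := by
  simp only [descTo1, List.mem_map, List.mem_reverse, List.mem_range] at h
  omega

lemma getD_descTo1 (a m : ℕ) : (descTo1 a).getD m 0 = a - m := by
  induction a generalizing m with
  | zero => simp [descTo1]
  | succ a ih =>
    cases m <;> simp only [descTo1_succ, List.getD_cons_zero, List.getD_cons_succ, ih] <;> omega

lemma getD_filter_descTo1 {ℓ a : ℕ} (hℓ : 1 ≤ ℓ) (ha : ℓ ≤ a) (m : ℕ) :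
    ((descTo1 a).filter (fun v => v ≠ ℓ)).getD m 0 =
      if m + ℓ + 1 ≤ a then a - m else a - m - 1 := by
  induction a, ha using Nat.le_induction generalizing m with
  | base =>
    obtain ⟨c, rfl⟩ : ∃ c, ℓ = c + 1 := ⟨ℓ - 1, by omega⟩
    have : (descTo1 c).filter (fun v => v ≠ c + 1) = descTo1 c :=
      List.filter_eq_self.2 fun x hx => by have := le_of_mem_descTo1 hx; simp; omega
    rw [descTo1_succ, List.filter_cons_of_neg (by simp), this, getD_descTo1, if_neg (by omega)]
    omega
  | succ a ha ih =>
    rw [descTo1_succ, List.filter_cons_of_pos (by simp; omega)]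
    cases m with
    | zero => simp; omega
    | succ m => rw [List.getD_cons_succ, ih m]; split_ifs <;> omega

end DescTo1

/-- `J` has at least two elements, none of them in the first block `{1, …, ℓ}`
(for `j : Fin n`, standing for `j + 1`, this reads `ℓ ≤ j`). -/
def OffBlock {n : ℕ} (ℓ : ℕ) (J : Finset (Fin n)) : Prop :=
  2 ≤ J.card ∧ ∀ j ∈ J, ℓ ≤ (j : ℕ)

/-- The one-line notation `(n, ℓ, n-1, …, ℓ+1, ℓ-1, …, 1)` of the permutation of the theorem. -/
def wordW (n ℓ : ℕ) : List ℕ := n :: ℓ :: (descTo1 (n - 1)).filter (fun v => v ≠ ℓ)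

section PermutationW

open Finset

variable {n ℓ : ℕ} {w : Equiv.Perm (Fin n)}

lemma card_initSet {k : ℕ} (hk : k ≤ n) : #(initSet w k) = k := by
  rw [initSet, card_image_of_injective _ w.injective, Fin.card_filter_val_lt]
  exact min_eq_right hk

lemma val_apply_of_olList_eq (h1 : 1 ≤ ℓ) (h2 : ℓ ≤ n - 2) (hw : olList w = wordW n ℓ)
    (i : Fin n) :
    (w i : ℕ) = if (i : ℕ) = 0 then n - 1 else if (i : ℕ) = 1 then ℓ - 1
      else if ℓ + i ≤ n then n - i else n - i - 1 := by
  have hi : (w i : ℕ) + 1 = (wordW n ℓ).getD i 0 := by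
    rw [← hw, olList, List.getD_eq_getElem _ _ (by simp)]
    simp
  obtain ⟨i, hin⟩ := i
  match i with
  | 0 => simp only [wordW, List.getD_cons_zero] at hi; simp only [if_pos]; omega
  | 1 => simp only [wordW, List.getD_cons_succ, List.getD_cons_zero] at hi; simp; omega
  | m + 2 =>
    simp only [wordW, List.getD_cons_succ, getD_filter_descTo1 h1 (by omega : ℓ ≤ n - 1)] at hi
    simp only [Nat.add_eq_zero_iff, OfNat.ofNat_ne_zero, and_false, if_false, Nat.reduceEqDiff]
    split_ifs at hi ⊢ <;> omega

lemma exists_apply_eq_of_olList_eq (h1 : 1 ≤ ℓ) (h2 : ℓ ≤ n - 2) (hw : olList w = wordW n ℓ)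
    (v : Fin n) : ∃ i : Fin n, w i = v ∧ (i : ℕ) + v ≤ n := by
  have hv := v.isLt
  have hval := val_apply_of_olList_eq h1 h2 hw
  have key : ∀ i : ℕ, (hi : i < n) → (w ⟨i, hi⟩ : ℕ) = v → i + v ≤ n →
      ∃ i : Fin n, w i = v ∧ (i : ℕ) + v ≤ n :=
    fun i hi h hle => ⟨⟨i, hi⟩, Fin.ext h, hle⟩
  by_cases hv1 : (v : ℕ) = n - 1
  · exact key 0 (by omega) (by rw [hval]; simp; omega) (by omega)
  by_cases hv2 : (v : ℕ) = ℓ - 1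
  · exact key 1 (by omega) (by rw [hval]; simp; omega) (by omega)
  by_cases hv3 : ℓ ≤ (v : ℕ)
  · exact key (n - v) (by omega) (by rw [hval]; simp only; split_ifs <;> omega) (by omega)
  · exact key (n - v - 1) (by omega) (by rw [hval]; simp only; split_ifs <;> omega) (by omega)

lemma mem_initSet_of_sub_lt (h1 : 1 ≤ ℓ) (h2 : ℓ ≤ n - 2) (hw : olList w = wordW n ℓ)
    {k : ℕ} {v : Fin n} (hv : n - k < v) : v ∈ initSet w k := by
  obtain ⟨i, rfl, hi⟩ := exists_apply_eq_of_olList_eq h1 h2 hw v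
  exact mem_image_of_mem w (mem_filter.2 ⟨mem_univ i, by omega⟩)

lemma sub_le_or_eq_of_mem_initSet (h1 : 1 ≤ ℓ) (h2 : ℓ ≤ n - 2) (hw : olList w = wordW n ℓ)
    {k : ℕ} {b : Fin n} (hb : b ∈ initSet w k) : n - k ≤ b ∨ (2 ≤ k ∧ (b : ℕ) = ℓ - 1) := by
  obtain ⟨i, hi, rfl⟩ := mem_image.1 hb
  have := val_apply_of_olList_eq h1 h2 hw i
  simp only [mem_filter, mem_univ, true_and] at hi
  split_ifs at this <;> omega

lemma exists_mem_initSet_lt (h1 : 1 ≤ ℓ) (h2 : ℓ ≤ n - 2) (hw : olList w = wordW n ℓ)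
    {k : ℕ} (hk : 2 ≤ k) : ∃ b ∈ initSet w k, (b : ℕ) < ℓ := by
  refine ⟨w ⟨1, by omega⟩, mem_image_of_mem w (mem_filter.2 ⟨mem_univ _, by simp; omega⟩), ?_⟩
  rw [val_apply_of_olList_eq h1 h2 hw]
  simp
  omega

lemma mem_Sw_iff_offBlock (h1 : 1 ≤ ℓ) (h2 : ℓ ≤ n - 2) (hw : olList w = wordW n ℓ)
    {J : Finset (Fin n)} (hJ : J.Nonempty) : J ∈ Sw w ↔ OffBlock ℓ J := by
  have hcard : #(initSet w #J) = #J := card_initSet (card_le_univ J |>.trans_eq (by simp))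
  have hB : (initSet w #J).Nonempty := card_pos.1 (by rw [hcard]; exact card_pos.2 hJ)
  constructor
  · intro hJS
    by_contra hoff
    refine hJS (finsetLE_of_min'_le hcard.symm hJ hB
      (fun v hv => mem_initSet_of_sub_lt h1 h2 hw (hcard ▸ hv)) (le_min' _ _ _ fun b hb => ?_))
    have hmin := min'_le_sub_card hJ
    rcases sub_le_or_eq_of_mem_initSet h1 h2 hw hb with hb | ⟨hk, hbℓ⟩
    · exact Fin.le_def.2 (by omega)
    · simp only [OffBlock, not_and, not_forall, not_le] at hoff
      obtain ⟨j, hj, hjℓ⟩ := hoff hk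
      have := J.min'_le j hj
      exact Fin.le_def.2 (by rw [Fin.le_def] at this; omega)
  · rintro ⟨hk, hJℓ⟩ hle
    obtain ⟨b, hb, hbℓ⟩ := exists_mem_initSet_lt h1 h2 hw hk
    have := (min'_le_min'_of_finsetLE hle hJ hB).trans ((initSet w #J).min'_le b hb)
    have := hJℓ _ (J.min'_mem hJ)
    rw [Fin.le_def] at *
    omega

end PermutationW

section Evaluation

open Finset

variable {K : Type*} [CommRing K] {n ℓ : ℕ}

noncomputable def evRowTwo (K : Type*) [CommRing K] (ℓ : ℕ) : MvPolynomial (ℕ × ℕ) K →ₐ[K] K :=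
  aeval fun p => if p.1 = 2 ∧ ℓ < p.2 then 0 else 1

lemma evRowTwo_prod_eq_one (ρ : ℕ → ℕ) (l : List ℕ)
    (h : ∀ r < l.length, ρ r = 2 → l.getD r 0 ≤ ℓ) :
    evRowTwo K ℓ ((List.range l.length).map fun r => X (ρ r, l.getD r 0)).prod = 1 := by
  rw [map_list_prod, List.map_map]
  refine List.prod_eq_one fun x hx => ?_
  obtain ⟨r, hr, rfl⟩ := List.mem_map.1 hx
  have := h r (List.mem_range.1 hr)
  simp only [Function.comp_apply, evRowTwo, aeval_X]
  rw [if_neg (by omega)]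

lemma evRowTwo_prod_eq_zero (ρ : ℕ → ℕ) (l : List ℕ) {r : ℕ} (hr : r < l.length)
    (hρ : ρ r = 2) (hl : ℓ < l.getD r 0) :
    evRowTwo K ℓ ((List.range l.length).map fun r => X (ρ r, l.getD r 0)).prod = 0 := by
  rw [map_list_prod, List.map_map]
  refine List.prod_eq_zero (List.mem_map.2 ⟨r, List.mem_range.2 hr, ?_⟩)
  simp only [Function.comp_apply, evRowTwo, aeval_X]
  rw [if_pos ⟨hρ, hl⟩]

lemma length_sort_map_add_one (J : Finset (Fin n)) :
    ((J.sort (· ≤ ·)).map (fun j => (j : ℕ) + 1) : List ℕ).length = #J := by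
  simp

lemma getD_sort_map_add_one (J : Finset (Fin n)) {r : ℕ} (hr : r < #J) :
    ((J.sort (· ≤ ·)).map (fun j => (j : ℕ) + 1) : List ℕ).getD r 0 =
      J.orderEmbOfFin rfl ⟨r, hr⟩ + 1 := by
  rw [List.getD_eq_getElem _ _ (by simpa using hr)]
  simp [← List.map_eq_flatMap, orderEmbOfFin_apply]

lemma evRowTwo_phiVal_eq_zero {J : Finset (Fin n)} (hJ : OffBlock ℓ J) :
    evRowTwo K ℓ (phiVal K n ℓ J) = 0 := by
  obtain ⟨hcard, hJℓ⟩ := hJ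
  have hpos : 0 < #J := by omega
  have hfilter : #(J.filter fun j : Fin n => (j : ℕ) + 1 ≤ ℓ) = 0 :=
    card_eq_zero.2 (filter_false_of_mem fun j hj => by have := hJℓ j hj; omega)
  unfold phiVal
  rw [if_neg (by omega), map_neg, neg_eq_zero]
  refine evRowTwo_prod_eq_zero _ _ (r := 0) (by rwa [length_sort_map_add_one]) rfl ?_
  rw [getD_sort_map_add_one J hpos, orderEmbOfFin_zero rfl hpos]
  have := hJℓ _ (J.min'_mem (card_pos.1 hpos))
  omega

lemma isUnit_evRowTwo_phiVal {J : Finset (Fin n)} (hJ : ¬ OffBlock ℓ J) :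
    IsUnit (evRowTwo K ℓ (phiVal K n ℓ J)) := by
  unfold phiVal
  split_ifs with h
  · rw [evRowTwo_prod_eq_one _ _ fun r hr hr2 => ?_]
    · exact isUnit_one
    obtain rfl : r = 1 := by omega
    rw [length_sort_map_add_one] at hr
    have h2 : 2 ≤ #(J.filter fun j : Fin n => (j : ℕ) + 1 ≤ ℓ) := h.resolve_left (by omega)
    obtain ⟨x, hx, y, hy, hxy⟩ := one_lt_card.1 h2
    rw [mem_filter] at hx hy
    rw [getD_sort_map_add_one J hr]
    rcases lt_or_gt_of_ne hxy with hlt | hlt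
    · have := Fin.le_def.1 (orderEmbOfFin_one_le hr hx.1 hy.1 hlt); omega
    · have := Fin.le_def.1 (orderEmbOfFin_one_le hr hy.1 hx.1 hlt); omega
  · rw [map_neg, evRowTwo_prod_eq_one _ _ fun r hr hr2 => ?_]
    · exact isUnit_one.neg
    obtain rfl : r = 0 := by unfold swap12 at hr2; split_ifs at hr2 <;> omega
    rw [length_sort_map_add_one] at hr
    simp only [OffBlock, not_and, not_forall, not_le] at hJ
    obtain ⟨j, hj, hjℓ⟩ := hJ (by omega)
    rw [getD_sort_map_add_one J hr, orderEmbOfFin_zero rfl hr]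
    have := Fin.le_def.1 (J.min'_le j hj)
    omega

end Evaluation

lemma MonomialFree.of_le_ker_aeval {σ K S : Type*} [CommSemiring K] [CommSemiring S]
    [Nontrivial S] [Algebra K S] {I : Ideal (MvPolynomial σ K)} {f : σ → S}
    (hf : ∀ i, IsUnit (f i)) (hI : I ≤ RingHom.ker (aeval f)) : MonomialFree I := fun m hm => by
  have hm := hI hm
  rw [RingHom.mem_ker, aeval_monomial, map_one, one_mul] at hm
  exact (IsUnit.prod_iff.2 fun i _ => (hf i).pow _).ne_zero hm

lemma MvPolynomial.X_mul_X_sub_X_mul_X_ne_zero {σ R : Type*} [CommRing R] [Nontrivial R]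
    {a b c d : σ} (hac : a ≠ c) (had : a ≠ d) : (X a * X b - X c * X d : MvPolynomial σ R) ≠ 0 := by
  classical
  intro h
  simpa [hac.symm, had.symm] using congrArg (eval fun i => if i = a then (0 : R) else 1) h

section Ideals

open Finset

variable {K : Type*} [CommRing K] {n ℓ : ℕ}

lemma Fnlw_le_ker_aeval {S : Type*} [CommRing S] [Algebra K S] (w : Equiv.Perm (Fin n))
    (ε : MvPolynomial (ℕ × ℕ) K →ₐ[K] S)
    (hε : ∀ J : PIdx n, J.1 ∈ Sw w → ε (phiVal K n ℓ J.1) = 0) :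
    Fnlw K n ℓ w ≤ RingHom.ker (aeval fun J : RIdx n w => ε (phiVal K n ℓ J.1.1)) := by
  have hcomp : (aeval fun J : RIdx n w => ε (phiVal K n ℓ J.1.1)).comp (piw K w) =
      ε.comp (phiMap K n ℓ) := by
    refine algHom_ext fun J => ?_
    simp only [AlgHom.comp_apply, piw, phiMap, aeval_X]
    split_ifs with hJ
    · rw [map_zero, hε J hJ]
    · rw [aeval_X]
  rw [Fnlw, Ideal.map_le_iff_le_comap]
  intro p hp
  rw [Ideal.mem_comap, RingHom.mem_ker, ← AlgHom.comp_apply, hcomp,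
    AlgHom.comp_apply, RingHom.mem_ker.1 hp, map_zero]

lemma piw_X_of_not_mem {w : Equiv.Perm (Fin n)} {J : PIdx n} (hJ : J.1 ∉ Sw w) :
    piw K w (X J) = X ⟨J, hJ⟩ := by
  simp [piw, hJ]

lemma phiVal_singleton (v : Fin n) : phiVal K n ℓ {v} = X (1, (v : ℕ) + 1) := by
  simp [phiVal]

lemma phiVal_pair {a b : Fin n} (ha : (a : ℕ) < ℓ) (hb : ℓ ≤ (b : ℕ)) :
    phiVal K n ℓ {a, b} = -(X (2, (a : ℕ) + 1) * X (1, (b : ℕ) + 1)) := by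
  have hab : a < b := Fin.lt_def.2 (by omega)
  have hsort : ({a, b} : Finset (Fin n)).sort (· ≤ ·) = [a, b] := by
    rw [sort_insert _ (by simpa using hab.le) (by simpa using hab.ne), sort_singleton]
  have hfilter : ({a, b} : Finset (Fin n)).filter (fun j : Fin n => (j : ℕ) + 1 ≤ ℓ) = {a} := by
    rw [filter_insert, if_pos (by omega), filter_singleton, if_neg (by omega)]
    rfl
  unfold phiVal
  rw [if_neg (by rw [hfilter, card_pair hab.ne]; simp), hsort]
  simp [List.range_succ, swap12]

lemma X_mul_X_sub_X_mul_X_mem_Fnl {A B C D : PIdx n} {a b c : Fin n} (hA : A.1 = {b})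
    (hB : B.1 = {a, c}) (hC : C.1 = {c}) (hD : D.1 = {a, b}) (ha : (a : ℕ) < ℓ)
    (hb : ℓ ≤ (b : ℕ)) (hc : ℓ ≤ (c : ℕ)) : X A * X B - X C * X D ∈ Fnl K n ℓ := by
  rw [Fnl, RingHom.mem_ker, map_sub, map_mul, map_mul]
  simp only [phiMap, aeval_X, hA, hB, hC, hD, phiVal_singleton, phiVal_pair ha hb,
    phiVal_pair ha hc]
  ring

end Ideals

lemma Fnlw_ne_bot {K : Type*} [CommRing K] [Nontrivial K] {n ℓ : ℕ} {w : Equiv.Perm (Fin n)}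
    (h1 : 1 ≤ ℓ) (h2 : ℓ ≤ n - 2) (hw : olList w = wordW n ℓ) : Fnlw K n ℓ w ≠ ⊥ := by
  set a : Fin n := ⟨0, by omega⟩
  set b : Fin n := ⟨n - 2, by omega⟩
  set c : Fin n := ⟨n - 1, by omega⟩
  have hab : a ≠ b := Fin.ne_of_val_ne (by simp [a, b]; omega)
  have hac : a ≠ c := Fin.ne_of_val_ne (by simp [a, c]; omega)
  have hbc : b ≠ c := Fin.ne_of_val_ne (by simp [b, c]; omega)
  let A : PIdx n := ⟨{b}, Finset.singleton_nonempty b,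
    (ne_of_mem_of_not_mem' (Finset.mem_univ a) (by simpa using hab)).symm⟩
  let B : PIdx n := ⟨{a, c}, Finset.insert_nonempty a {c},
    (ne_of_mem_of_not_mem' (Finset.mem_univ b) (by simp [hab.symm, hbc])).symm⟩
  let C : PIdx n := ⟨{c}, Finset.singleton_nonempty c,
    (ne_of_mem_of_not_mem' (Finset.mem_univ a) (by simpa using hac)).symm⟩
  let D : PIdx n := ⟨{a, b}, Finset.insert_nonempty a {b},
    (ne_of_mem_of_not_mem' (Finset.mem_univ c) (by simp [hac.symm, hbc.symm])).symm⟩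
  have hS : ∀ J : PIdx n, J.1.card = 1 ∨ a ∈ J.1 → J.1 ∉ Sw w := by
    intro J hJ
    rw [mem_Sw_iff_offBlock h1 h2 hw J.2.1]
    rintro ⟨hcard, hℓ⟩
    rcases hJ with hJ | hJ
    · omega
    · exact absurd (hℓ a hJ) (by change ¬ ℓ ≤ 0; omega)
  have hmem := Ideal.mem_map_of_mem (piw K w)
    (X_mul_X_sub_X_mul_X_mem_Fnl (K := K) (A := A) (B := B) (C := C) (D := D) rfl rfl rfl rfl
      (by change 0 < ℓ; omega) (by change ℓ ≤ n - 2; omega) (by change ℓ ≤ n - 1; omega))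
  rw [map_sub, map_mul, map_mul, piw_X_of_not_mem (hS A (Or.inl (Finset.card_singleton b))),
    piw_X_of_not_mem (hS B (Or.inr (Finset.mem_insert_self a _))),
    piw_X_of_not_mem (hS C (Or.inl (Finset.card_singleton c))),
    piw_X_of_not_mem (hS D (Or.inr (Finset.mem_insert_self a _)))] at hmem
  intro hbot
  rw [← Fnlw, hbot, Ideal.mem_bot] at hmem
  refine X_mul_X_sub_X_mul_X_ne_zero (fun h => hbc ?_) (fun h => hab ?_) hmem
  · simpa [A, C] using congrArg (fun J : RIdx n w => J.1.1) h
  · simpa [A, D] using congrArg (fun J : RIdx n w => a ∈ J.1.1) h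

theorem stmt11_general (K : Type*) [Field K] (n ℓ : ℕ)
    (h1 : 1 ≤ ℓ) (h2 : ℓ ≤ n - 2) (w : Equiv.Perm (Fin n))
    (hw : olList w = n :: ℓ :: ((descTo1 (n - 1)).filter (fun v => v ≠ ℓ))) :
    w ∈ Tset K n ℓ := by
  have hS (J : PIdx n) : J.1 ∈ Sw w ↔ OffBlock ℓ J.1 := mem_Sw_iff_offBlock h1 h2 hw J.2.1
  refine ⟨Fnlw_ne_bot h1 h2 hw, MonomialFree.of_le_ker_aeval (fun J => ?_)
    (Fnlw_le_ker_aeval w (evRowTwo K ℓ) fun J hJ => ?_)⟩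
  · exact isUnit_evRowTwo_phiVal ((hS J.1).not.1 J.2)
  · exact evRowTwo_phiVal_eq_zero ((hS J).1 hJ)

theorem stmt11 (K : Type*) [Field K] [CharZero K] (n ℓ : ℕ) (hn : 3 ≤ n)
    (h1 : 1 ≤ ℓ) (h2 : ℓ ≤ n - 2) (w : Equiv.Perm (Fin n))
    (hw : olList w = n :: ℓ :: ((descTo1 (n - 1)).filter (fun v => v ≠ ℓ))) :
    w ∈ Tset K n ℓ :=
  stmt11_general K n ℓ h1 h2 w hw
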